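/- Let P and Q be probability measures on a measurable space 𝒵 with Q absolutely continuous with respect to P, and let L = dQ/dP be the likelihood ratio. Then for every measurable function g : 𝒵 → ℝ, AUC(g) ≤ AUC(L); that is, the likelihood ratio maximizes the AUC among all distinguishers. -/

import Mathlib

open MeasureTheory ProbabilityTheory Filter Topology
open scoped ENNReal NNReal ProbabilityTheory

noncomputable section

namespace AUCBound

lemma w_le (a b : ℝ≥0∞) (x y : ℝ) :
    ((if x < y then (1:ℝ≥0∞) else 0) + 2⁻¹ * (if x = y then 1 else 0)) * b
      + ((if y < x then (1:ℝ≥0∞) else 0) + 2⁻¹ * (if y = x then 1 else 0)) * a ≤ max a b := by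
  rcases lt_trichotomy x y with h|h|h
  · simp [h, h.ne, h.ne', not_lt.mpr h.le]
  · subst h
    simp only [lt_irrefl, if_false, if_pos rfl, zero_add, mul_one, if_true]
    calc 2⁻¹ * b + 2⁻¹ * a ≤ 2⁻¹ * max a b + 2⁻¹ * max a b := by
          gcongr
          · exact le_max_right _ _
          · exact le_max_left _ _
      _ = (2⁻¹ + 2⁻¹) * max a b := by ring
      _ = max a b := by rw [ENNReal.inv_two_add_inv_two, one_mul]
  · simp [h, h.ne, h.ne', not_lt.mpr h.le]

lemma w_eq (a b : ℝ≥0∞) (ha : a ≠ ∞) (hb : b ≠ ∞) :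
    ((if a.toReal < b.toReal then (1:ℝ≥0∞) else 0)
        + 2⁻¹ * (if a.toReal = b.toReal then 1 else 0)) * b
      + ((if b.toReal < a.toReal then (1:ℝ≥0∞) else 0)
        + 2⁻¹ * (if b.toReal = a.toReal then 1 else 0)) * a = max a b := by
  rcases lt_trichotomy a b with h|h|h
  · have h' : a.toReal < b.toReal := (ENNReal.toReal_lt_toReal ha hb).mpr h
    simp [h', h'.ne, h'.ne', not_lt.mpr h'.le, max_eq_right h.le]
  · subst h
    simp only [lt_irrefl, if_false, if_pos rfl, zero_add, mul_one, max_self, if_true]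
    calc 2⁻¹ * a + 2⁻¹ * a = (2⁻¹ + 2⁻¹) * a := by ring
      _ = a := by rw [ENNReal.inv_two_add_inv_two, one_mul]
  · have h' : b.toReal < a.toReal := (ENNReal.toReal_lt_toReal hb ha).mpr h
    simp [h', h'.ne, h'.ne', not_lt.mpr h'.le, max_eq_left h.le]

/-- `AUC P Q g`: probability that `g` ranks an independent `Q`-draw above an
independent `P`-draw, counting ties as one half. -/
def AUC {𝒵 : Type*} [MeasurableSpace 𝒵] (P Q : Measure 𝒵) (g : 𝒵 → ℝ) : ℝ :=
  ((P.prod Q) {p | g p.1 < g p.2}).toReal + (1 / 2) * ((P.prod Q) {p | g p.1 = g p.2}).toReal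

theorem likelihood_ratio_maximizes_AUC
    {𝒵 : Type*} [MeasurableSpace 𝒵]
    (P Q : Measure 𝒵) [IsProbabilityMeasure P] [IsProbabilityMeasure Q]
    (habs : Q ≪ P) (g : 𝒵 → ℝ) (hg : Measurable g) :
    AUC P Q g ≤ AUC P Q (fun z => (Q.rnDeriv P z).toReal) := by
  classical
  set f := Q.rnDeriv P with hfdef
  have hfm : Measurable f := Measure.measurable_rnDeriv Q P
  set L : 𝒵 → ℝ := fun z => (f z).toReal with hLdef
  have hLm : Measurable L := hfm.ennreal_toReal
  -- rewrite `P.prod Q` measures as lintegrals against `P.prod P`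
  have hA : ∀ {S : Set (𝒵 × 𝒵)}, MeasurableSet S →
      (P.prod Q) S = ∫⁻ p, S.indicator (fun q => f q.2) p ∂(P.prod P) := by
    intro S hS
    have hQ : Q = P.withDensity f := (Measure.withDensity_rnDeriv_eq Q P habs).symm
    have hm : Measurable (fun p : 𝒵 × 𝒵 => S.indicator (fun q => f q.2) p) :=
      (hfm.comp measurable_snd).indicator hS
    rw [MeasureTheory.lintegral_prod _ hm.aemeasurable]
    conv_lhs => rw [hQ]
    rw [Measure.prod_apply hS]
    refine lintegral_congr fun x => ?_
    rw [withDensity_apply _ (measurable_prodMk_left hS),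
      ← lintegral_indicator (measurable_prodMk_left hS)]
    exact lintegral_congr fun y => rfl
  have hS1 : ∀ {h : 𝒵 → ℝ}, Measurable h → MeasurableSet {p : 𝒵 × 𝒵 | h p.1 < h p.2} :=
    fun hh => measurableSet_lt (hh.comp measurable_fst) (hh.comp measurable_snd)
  have hS2 : ∀ {h : 𝒵 → ℝ}, Measurable h → MeasurableSet {p : 𝒵 × 𝒵 | h p.1 = h p.2} :=
    fun hh => measurableSet_eq_fun (hh.comp measurable_fst) (hh.comp measurable_snd)
  set W : (𝒵 → ℝ) → 𝒵 × 𝒵 → ℝ≥0∞ := fun h p =>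
    (if h p.1 < h p.2 then (1:ℝ≥0∞) else 0) + 2⁻¹ * (if h p.1 = h p.2 then 1 else 0)
    with hWdef
  have hWm : ∀ {h : 𝒵 → ℝ}, Measurable h → Measurable (W h) := fun hh =>
    (Measurable.ite (hS1 hh) measurable_const measurable_const).add
      (measurable_const.mul (Measurable.ite (hS2 hh) measurable_const measurable_const))
  have hf2 : Measurable (fun q : 𝒵 × 𝒵 => f q.2) := hfm.comp measurable_snd
  set val : (𝒵 → ℝ) → ℝ≥0∞ := fun h => ∫⁻ p, W h p * f p.2 ∂(P.prod P) with hvaldef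
  have hstep1 : ∀ {h : 𝒵 → ℝ}, Measurable h →
      (P.prod Q) {p : 𝒵 × 𝒵 | h p.1 < h p.2} + 2⁻¹ * (P.prod Q) {p : 𝒵 × 𝒵 | h p.1 = h p.2}
        = val h := by
    intro h hh
    simp only [hvaldef]
    rw [hA (hS1 hh), hA (hS2 hh),
      ← lintegral_const_mul 2⁻¹ (hf2.indicator (hS2 hh)),
      ← lintegral_add_left (hf2.indicator (hS1 hh))]
    refine lintegral_congr fun p => ?_
    simp only [hWdef, Set.indicator, Set.mem_setOf_eq]
    split_ifs <;> ring
  have hswap : ∀ {h : 𝒵 → ℝ}, Measurable h →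
      ∫⁻ p, W h p * f p.2 ∂(P.prod P) = ∫⁻ p, W h p.swap * f p.1 ∂(P.prod P) := by
    intro h hh
    have hFm : Measurable (fun p : 𝒵 × 𝒵 => W h p * f p.2) := (hWm hh).mul hf2
    calc ∫⁻ p, W h p * f p.2 ∂(P.prod P)
        = ∫⁻ p, W h p * f p.2 ∂(Measure.map Prod.swap (P.prod P)) := by
          rw [Measure.prod_swap]
      _ = ∫⁻ p, W h p.swap * f p.1 ∂(P.prod P) := lintegral_map hFm measurable_swap
  have hfin : ∀ᵐ p ∂(P.prod P), f p.1 ≠ ∞ ∧ f p.2 ≠ ∞ := by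
    have h0 : P (f ⁻¹' {∞}) = 0 := by
      have h1 := Measure.rnDeriv_lt_top Q P
      rw [ae_iff] at h1
      convert h1 using 2
      ext z
      simp [lt_top_iff_ne_top, hfdef]
    rw [ae_iff]
    refine measure_mono_null (fun p hp => ?_)
      (?_ : (P.prod P) ((f ⁻¹' {∞}) ×ˢ Set.univ ∪ Set.univ ×ˢ (f ⁻¹' {∞})) = 0)
    · simp only [Set.mem_setOf_eq, not_and_or, not_not] at hp
      rcases hp with hp|hp
      · exact Or.inl ⟨hp, trivial⟩
      · exact Or.inr ⟨trivial, hp⟩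
    · refine measure_union_null ?_ ?_ <;> rw [Measure.prod_prod] <;> simp [h0]
  have hmain : val g + val g ≤ val L + val L := by
    have e : ∀ {h : 𝒵 → ℝ}, Measurable h → val h + val h
        = ∫⁻ p, (W h p * f p.2 + W h p.swap * f p.1) ∂(P.prod P) := by
      intro h hh
      simp only [hvaldef]
      nth_rewrite 2 [hswap hh]
      rw [← lintegral_add_left (f := fun p : 𝒵 × 𝒵 => W h p * f p.2) ((hWm hh).mul hf2)]
    rw [e hg, e hLm]
    refine lintegral_mono_ae ?_
    filter_upwards [hfin] with p hp
    have key := w_le (f p.1) (f p.2) (g p.1) (g p.2)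
    have keyL := w_eq (f p.1) (f p.2) hp.1 hp.2
    simp only [hWdef, Prod.fst_swap, Prod.snd_swap, hLdef]
    exact le_trans key (le_of_eq keyL.symm)
  have hval_ne : ∀ {h : 𝒵 → ℝ}, Measurable h → val h ≠ ∞ := by
    intro h hh
    rw [← hstep1 hh]
    exact ENNReal.add_ne_top.mpr ⟨measure_ne_top _ _,
      ENNReal.mul_ne_top (by simp) (measure_ne_top _ _)⟩
  have hle : val g ≤ val L := by
    rw [← two_mul, ← two_mul] at hmain
    exact (ENNReal.mul_le_mul_iff_right two_ne_zero ENNReal.ofNat_ne_top).mp hmain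
  have hAUC : ∀ {h : 𝒵 → ℝ}, Measurable h → AUC P Q h = (val h).toReal := by
    intro h hh
    rw [AUC, ← hstep1 hh,
      ENNReal.toReal_add (measure_ne_top _ _)
        (ENNReal.mul_ne_top (by simp) (measure_ne_top _ _)),
      ENNReal.toReal_mul]
    norm_num
  rw [hAUC hg, hAUC hLm]
  exact (ENNReal.toReal_le_toReal (hval_ne hg) (hval_ne hLm)).mpr hle

end AUCBound
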